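/- arXiv:1405.0689 — 6 statements merged into one kernel-verified Lean document; each statement's English description precedes it below -/
import Mathlib

section
/- Let p(z) = z(z-1)(z-a)(z-b) where a = r_a·exp(iα), b = r_b·exp(iβ) with r_a, r_b > 0 and 0 < α < β < 2π. Then it is impossible that the three roots w₁, w₂, w₃ of p' satisfy simultaneously: arg(w₁) ∈ (0, α), arg(w₂) ∈ (α, β), arg(w₃) ∈ (β, 2π) (arguments taken in [0, 2π)). That is, at least one of the three open angular sectors at 0 bounded by the rays through 1, a, b contains no root of p'. -/
open Polynomial Real Complex

noncomputable def arg2pi (z : ℂ) : ℝ := if 0 ≤ z.arg then z.arg else z.arg + 2 * π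

lemma arg2pi_coe_angle (z : ℂ) : ((arg2pi z : ℝ) : Real.Angle) = (z.arg : Real.Angle) := by
  unfold arg2pi
  split
  · rfl
  · rw [Real.Angle.coe_add, Real.Angle.coe_two_pi, add_zero]

lemma arg_exp_angle (θ : ℝ) : ((Complex.exp (Complex.I * θ)).arg : Real.Angle) = (θ : Real.Angle) := by
  rw [mul_comm, Complex.exp_mul_I]
  have := Complex.arg_cos_add_sin_mul_I_coe_angle (θ : Real.Angle)
  rw [Real.Angle.cos_coe, Real.Angle.sin_coe, Complex.ofReal_cos, Complex.ofReal_sin] at this; exact this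

/-- For `p(z) = z(z-1)(z-a)(z-b)` with `a = r_a e^{iα}`, `b = r_b e^{iβ}`,
`r_a, r_b > 0`, `0 < α < β < 2π`, it is impossible that the three roots
`w₁, w₂, w₃` of `p'` lie one in each of the three open sectors at `0`
bounded by the rays through `1`, `a` and `b`. -/
theorem not_all_sectors_occupied (a b w₁ w₂ w₃ : ℂ) (rA rB α β : ℝ)
    (hrA : 0 < rA) (hrB : 0 < rB) (hα : 0 < α) (hαβ : α < β) (hβ : β < 2 * π)
    (ha : a = rA * Complex.exp (Complex.I * α))
    (hb : b = rB * Complex.exp (Complex.I * β))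
    (p : ℂ[X]) (hp : p = X * (X - C 1) * (X - C a) * (X - C b))
    (hw : derivative p = C 4 * ((X - C w₁) * (X - C w₂) * (X - C w₃))) :
    ¬ (arg2pi w₁ ∈ Set.Ioo 0 α ∧ arg2pi w₂ ∈ Set.Ioo α β ∧
        arg2pi w₃ ∈ Set.Ioo β (2 * π)) := by
  rintro ⟨h1, h2, h3⟩
  subst hp
  have key : (4:ℂ) * (w₁ * w₂ * w₃) = a * b := by
    have := congrArg (Polynomial.eval (0:ℂ)) hw
    simp [derivative_mul] at this
    linear_combination -this
  have ha0 : a ≠ 0 := by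
    rw [ha]; exact mul_ne_zero (by exact_mod_cast hrA.ne') (Complex.exp_ne_zero _)
  have hb0 : b ≠ 0 := by
    rw [hb]; exact mul_ne_zero (by exact_mod_cast hrB.ne') (Complex.exp_ne_zero _)
  have hw1 : w₁ ≠ 0 := by rintro rfl; simp at key; tauto
  have hw2 : w₂ ≠ 0 := by rintro rfl; simp at key; tauto
  have hw3 : w₃ ≠ 0 := by rintro rfl; simp at key; tauto
  -- angle identity
  have harg_a : ((a.arg : ℝ) : Real.Angle) = (α : Real.Angle) := by
    rw [ha, Complex.arg_real_mul _ hrA, arg_exp_angle]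
  have harg_b : ((b.arg : ℝ) : Real.Angle) = (β : Real.Angle) := by
    rw [hb, Complex.arg_real_mul _ hrB, arg_exp_angle]
  have hprod : w₁ * w₂ * w₃ = (4:ℂ)⁻¹ * (a * b) := by
    field_simp
    linear_combination key
  have hangle : ((arg2pi w₁ + arg2pi w₂ + arg2pi w₃ : ℝ) : Real.Angle)
      = ((α + β : ℝ) : Real.Angle) := by
    rw [Real.Angle.coe_add, Real.Angle.coe_add, arg2pi_coe_angle, arg2pi_coe_angle,
      arg2pi_coe_angle, ← Complex.arg_mul_coe_angle hw1 hw2,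
      ← Complex.arg_mul_coe_angle (mul_ne_zero hw1 hw2) hw3, hprod]
    have : ((4:ℂ)⁻¹ : ℂ) = ((4⁻¹:ℝ) : ℂ) := by norm_num
    rw [this, Complex.arg_real_mul _ (by norm_num : (0:ℝ) < 4⁻¹),
      Complex.arg_mul_coe_angle ha0 hb0, harg_a, harg_b, Real.Angle.coe_add]
  rw [Real.Angle.angle_eq_iff_two_pi_dvd_sub] at hangle
  obtain ⟨k, hk⟩ := hangle
  have hk1 : (0:ℝ) < 2 * π * k := by
    rw [← hk]
    have := h1.1; have := h2.1; have := h3.1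
    linarith [h1.1, h2.1, h3.1]
  have hk2 : 2 * π * (k:ℝ) < 2 * π * 1 := by
    rw [← hk]
    linarith [h1.2, h2.2, h3.2]
  have hpi := Real.pi_pos
  have hk1' : (0:ℤ) < k := by
    have : (0:ℝ) < k := by nlinarith
    exact_mod_cast this
  have hk2' : (k:ℤ) < 1 := by
    have : (k:ℝ) < 1 := lt_of_mul_lt_mul_left hk2 (by positivity)
    exact_mod_cast this
  omega
end

section
/- Let p be a complex polynomial of degree 4 with four distinct roots z₀, z₁, z₂, z₃ such that z₀ lies in the interior of the convex hull (triangle) of z₁, z₂, z₃. Then among the three open triangles with vertices (z₀,z₁,z₂), (z₀,z₂,z₃), (z₀,z₃,z₁), at least one contains no root of p'. -/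
/-!
Suppose each open subtriangle contains a critical point `wᵢ`. These are distinct, so
`p' = 4 (X - w₁)(X - w₂)(X - w₃)`, and evaluating at `z₀` gives
`∏ (wᵢ - z₀) = ¼ ∏ (zᵢ - z₀)`. Seen from `z₀`, the vector `wᵢ - z₀` lies strictly inside the angle
from `zᵢ - z₀` to `zᵢ₊₁ - z₀`, and these three angles add up to `2π`. Hence the arguments of the
quotients `(wᵢ - z₀) / (zᵢ - z₀)` add up to a number strictly between `0` and `2π`, so their
product cannot be the positive real `¼`.
-/
open Polynomial Complex Set Real

attribute [local instance] Complex.finrank_real_complex_fact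

-- `ω U V = (conj U * V).im` is positive iff `V` is obtained from `U` by a counterclockwise turn
-- through an angle in `(0, π)`.
local notation "ω" => Complex.orientation.areaForm

theorem lt_apply_of_mem_interior_convexHull {E : Type*} [NormedAddCommGroup E] [NormedSpace ℝ E]
    [FiniteDimensional ℝ E] {f : E →ₗ[ℝ] ℝ} (hf : f ≠ 0) {s : Set E} {c : ℝ}
    (hs : ∀ x ∈ s, c ≤ f x) {w : E} (hw : w ∈ interior (convexHull ℝ s)) : c < f w := by
  have hsub : convexHull ℝ s ⊆ f ⁻¹' Ici c := convexHull_min hs ((convex_Ici c).linear_preimage f)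
  have hopen : IsOpenMap f := f.isOpenMap_of_finiteDimensional (LinearMap.surjective_of_ne_zero hf)
  simpa using hopen.interior_preimage_subset_preimage_interior (interior_mono hsub hw)

theorem areaForm_sub_sub_rotate (a b c : ℂ) : ω (b - a) (c - a) = ω (c - b) (a - b) := by
  simp only [Complex.areaForm, mul_im, conj_re, conj_im, sub_re, sub_im]
  ring

theorem areaForm_ne_zero {v : ℂ} (hv : v ≠ 0) : ω v ≠ 0 := fun h => by
  have := LinearMap.congr_fun h (I * v)
  simp only [Complex.areaForm, mul_im, conj_re, conj_im, I_re, I_im, mul_re, LinearMap.zero_apply]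
    at this
  exact hv (normSq_eq_zero.1 (by rw [normSq_apply]; linarith))

theorem areaForm_sub_pos_of_mem_interior_convexHull {a b c w : ℂ} (hab : a ≠ b)
    (habc : 0 ≤ ω (b - a) (c - a)) (hw : w ∈ interior (convexHull ℝ {a, b, c})) :
    0 < ω (b - a) (w - a) := by
  rw [map_sub, sub_pos]
  refine lt_apply_of_mem_interior_convexHull (areaForm_ne_zero (sub_ne_zero.2 hab.symm)) ?_ hw
  have hself := Complex.orientation.areaForm_apply_self (b - a)
  rw [map_sub] at habc hself
  rintro v (rfl | rfl | rfl) <;> linarith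

theorem arg_mem_Ioo_of_im_pos {z : ℂ} (hz : 0 < z.im) : arg z ∈ Ioo 0 π := by
  refine ⟨(arg_nonneg_iff.2 hz.le).lt_of_ne fun h => ?_, arg_lt_pi_iff.2 (Or.inr hz.ne')⟩
  exact hz.ne' (arg_eq_zero_iff.1 h.symm).2

theorem arg_lt_arg_of_im_div_neg {f x : ℂ} (hx : 0 < x.im) (hfx : (f / x).im < 0) :
    arg f < arg x := by
  have hx0 : x ≠ 0 := by rintro rfl; simp at hx
  have hfx0 : f / x ≠ 0 := by rintro h; simp [h] at hfx
  have hneg : arg (f / x) < 0 := arg_neg_iff.2 hfx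
  obtain ⟨hpos, hlt⟩ := arg_mem_Ioo_of_im_pos hx
  have hsplit : arg f = arg (f / x) + arg x := by
    rw [← arg_mul hfx0 hx0 ⟨by linarith [neg_pi_lt_arg (f / x)], by linarith⟩,
      div_mul_cancel₀ f hx0]
  linarith

theorem arg_add_arg_add_arg_eq_two_pi {x y z : ℂ} (hx : 0 < x.im) (hy : 0 < y.im) (hz : 0 < z.im)
    (hxyz : arg (x * y * z) = 0) : arg x + arg y + arg z = 2 * π := by
  have hne {u : ℂ} (hu : 0 < u.im) : u ≠ 0 := by rintro rfl; simp at hu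
  have hangle : ((arg x + arg y + arg z : ℝ) : Real.Angle) = (2 * π : ℝ) := by
    rw [Real.Angle.coe_two_pi, Real.Angle.coe_add, Real.Angle.coe_add,
      ← arg_mul_coe_angle (hne hx) (hne hy),
      ← arg_mul_coe_angle (mul_ne_zero (hne hx) (hne hy)) (hne hz),
      hxyz, Real.Angle.coe_zero]
  obtain ⟨k, hk⟩ := Real.Angle.angle_eq_iff_two_pi_dvd_sub.1 hangle
  obtain ⟨hx0, hxπ⟩ := arg_mem_Ioo_of_im_pos hx
  obtain ⟨hy0, hyπ⟩ := arg_mem_Ioo_of_im_pos hy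
  obtain ⟨hz0, hzπ⟩ := arg_mem_Ioo_of_im_pos hz
  have hk0 : k = 0 := by
    have hlo : (-1 : ℝ) < k := by nlinarith [Real.pi_pos]
    have hhi : (k : ℝ) < 1 := by nlinarith [Real.pi_pos]
    have : (-1 : ℤ) < k := by exact_mod_cast hlo
    have : k < (1 : ℤ) := by exact_mod_cast hhi
    omega
  simp only [hk0, Int.cast_zero, mul_zero] at hk
  linarith

theorem im_div_eq_areaForm_div_normSq (U V : ℂ) : (V / U).im = ω U V / normSq U := by
  simp only [Complex.areaForm, div_im, mul_im, conj_re, conj_im]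
  ring

theorem im_div_pos_of_areaForm_pos {U V : ℂ} (h : 0 < ω U V) : 0 < (V / U).im := by
  have hU : U ≠ 0 := by rintro rfl; simp at h
  rw [im_div_eq_areaForm_div_normSq]
  exact div_pos h (normSq_pos.2 hU)

-- Equivalently: the origin lies in the open triangle `ABC`, which is positively oriented.
def SurroundsOrigin (A B C : ℂ) : Prop := 0 < ω A B ∧ 0 < ω B C ∧ 0 < ω C A

-- When `0 < ω A B`, this is the open convex cone spanned by `A` and `B`.
def InSector (A B u : ℂ) : Prop := 0 < ω A u ∧ 0 < ω u B

theorem InSector.ne {A B C u v : ℂ} (hu : InSector A B u) (hv : InSector B C v) : u ≠ v := by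
  rintro rfl
  have := hu.2
  rw [Orientation.areaForm_swap] at this
  linarith [hv.1]

theorem InSector.arg_div_lt {A B u : ℂ} (hAB : 0 < ω A B) (hu : InSector A B u) :
    arg (u / A) < arg (B / A) := by
  have hA : A ≠ 0 := by rintro rfl; simp at hAB
  have hB : B ≠ 0 := by rintro rfl; simp at hAB
  refine arg_lt_arg_of_im_div_neg (im_div_pos_of_areaForm_pos hAB) ?_
  rw [div_div_div_cancel_right₀ hA, im_div_eq_areaForm_div_normSq, Orientation.areaForm_swap]
  exact div_neg_of_neg_of_pos (neg_neg_of_pos hu.2) (normSq_pos.2 hB)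

theorem surroundsOrigin_sub_of_mem_interior_convexHull
    {q a b c : ℂ} (hab : a ≠ b) (hbc : b ≠ c) (hca : c ≠ a) (habc : 0 ≤ ω (b - a) (c - a))
    (hq : q ∈ interior (convexHull ℝ {a, b, c})) : SurroundsOrigin (a - q) (b - q) (c - q) := by
  refine ⟨?_, ?_, ?_⟩
  · rw [areaForm_sub_sub_rotate q a b]
    exact areaForm_sub_pos_of_mem_interior_convexHull hab habc hq
  · rw [areaForm_sub_sub_rotate q b c]
    refine areaForm_sub_pos_of_mem_interior_convexHull hbc
      (by rwa [← areaForm_sub_sub_rotate]) ?_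
    rwa [Set.pair_comm c a, Set.insert_comm b a]
  · rw [areaForm_sub_sub_rotate q c a]
    refine areaForm_sub_pos_of_mem_interior_convexHull hca
      (by rwa [← areaForm_sub_sub_rotate, ← areaForm_sub_sub_rotate]) ?_
    rwa [Set.insert_comm c a, Set.pair_comm c b]

theorem surroundsOrigin_sub_or_of_mem_interior_convexHull
    {q a b c : ℂ} (hab : a ≠ b) (hbc : b ≠ c) (hca : c ≠ a)
    (hq : q ∈ interior (convexHull ℝ {a, b, c})) :
    SurroundsOrigin (a - q) (b - q) (c - q) ∨ SurroundsOrigin (a - q) (c - q) (b - q) := by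
  rcases le_total 0 (ω (b - a) (c - a)) with habc | habc
  · exact .inl (surroundsOrigin_sub_of_mem_interior_convexHull hab hbc hca habc hq)
  · refine .inr (surroundsOrigin_sub_of_mem_interior_convexHull hca.symm hbc.symm hab.symm ?_ ?_)
    · rw [Orientation.areaForm_swap]
      linarith
    · rwa [Set.pair_comm c b]

theorem inSector_sub_of_mem_interior_convexHull {q a b w : ℂ} (h : 0 < ω (a - q) (b - q))
    (hw : w ∈ interior (convexHull ℝ {q, a, b})) : InSector (a - q) (b - q) (w - q) := by
  have hqa : q ≠ a := by rintro rfl; simp at h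
  have hbq : b ≠ q := by rintro rfl; simp at h
  refine ⟨areaForm_sub_pos_of_mem_interior_convexHull hqa h.le hw, ?_⟩
  rw [← areaForm_sub_sub_rotate b q w]
  refine areaForm_sub_pos_of_mem_interior_convexHull hbq (c := a)
    (by rw [areaForm_sub_sub_rotate b q a]; exact h.le) ?_
  rwa [Set.insert_comm b q, Set.pair_comm b a]

theorem SurroundsOrigin.mul_mul_ne_ofReal_mul {A B C u₁ u₂ u₃ : ℂ} (h : SurroundsOrigin A B C)
    (hu₁ : InSector A B u₁) (hu₂ : InSector B C u₂) (hu₃ : InSector C A u₃) {r : ℝ} (hr : 0 < r) :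
    u₁ * u₂ * u₃ ≠ r * (A * B * C) := by
  intro hu
  obtain ⟨hAB, hBC, hCA⟩ := h
  have hA : A ≠ 0 := by rintro rfl; simp at hAB
  have hB : B ≠ 0 := by rintro rfl; simp at hBC
  have hC : C ≠ 0 := by rintro rfl; simp at hCA
  have hsides := arg_add_arg_add_arg_eq_two_pi (im_div_pos_of_areaForm_pos hAB)
    (im_div_pos_of_areaForm_pos hBC) (im_div_pos_of_areaForm_pos hCA)
    (by rw [show B / A * (C / B) * (A / C) = 1 by field_simp, arg_one])
  have hcone := arg_add_arg_add_arg_eq_two_pi (im_div_pos_of_areaForm_pos hu₁.1)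
    (im_div_pos_of_areaForm_pos hu₂.1) (im_div_pos_of_areaForm_pos hu₃.1)
    (by rw [show u₁ / A * (u₂ / B) * (u₃ / C) = r by field_simp; linear_combination hu,
      arg_ofReal_of_nonneg hr.le])
  linarith [hu₁.arg_div_lt hAB, hu₂.arg_div_lt hBC, hu₃.arg_div_lt hCA]

theorem eq_C_leadingCoeff_mul_prod_X_sub_C {R : Type*} [CommRing R] [IsDomain R] {q : R[X]}
    (hq : q ≠ 0) {s : Finset R} (hs : ∀ a ∈ s, q.eval a = 0) (hcard : q.natDegree ≤ s.card) :
    q = C q.leadingCoeff * ∏ a ∈ s, (X - C a) := by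
  have hroots := roots_eq_of_natDegree_le_card_of_ne_zero hs hcard hq
  have hcard' : Multiset.card q.roots = q.natDegree :=
    le_antisymm (card_roots' q) (by rw [hroots]; exact hcard)
  have hprod := C_leadingCoeff_mul_prod_multiset_X_sub_C hcard'
  rw [hroots, ← Finset.prod_eq_multiset_prod] at hprod
  exact hprod.symm

theorem derivative_eq_of_monic_of_natDegree_eq_four {K : Type*} [Field K] [CharZero K]
    {p : K[X]} (hmonic : p.Monic) (hdeg : p.natDegree = 4) {w₁ w₂ w₃ : K}
    (h₁₂ : w₁ ≠ w₂) (h₁₃ : w₁ ≠ w₃) (h₂₃ : w₂ ≠ w₃) (hw₁ : eval w₁ (derivative p) = 0)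
    (hw₂ : eval w₂ (derivative p) = 0) (hw₃ : eval w₃ (derivative p) = 0) :
    derivative p = C 4 * ((X - C w₁) * (X - C w₂) * (X - C w₃)) := by
  classical
  have hdeg' : (derivative p).natDegree = 3 := by rw [natDegree_derivative, hdeg]
  have hlead : (derivative p).leadingCoeff = 4 := by
    have hcoeff : p.coeff 4 = 1 := hdeg ▸ hmonic.coeff_natDegree
    rw [leadingCoeff, hdeg', coeff_derivative]
    norm_num [hcoeff]
  have hne : derivative p ≠ 0 := fun h => by simp [h] at hlead
  have hs : ({w₁, w₂, w₃} : Finset K).card = 3 := Finset.card_eq_three.2 ⟨_, _, _, h₁₂, h₁₃, h₂₃, rfl⟩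
  rw [eq_C_leadingCoeff_mul_prod_X_sub_C hne (s := {w₁, w₂, w₃}) (by simp [hw₁, hw₂, hw₃])
    (by rw [hdeg', hs]), hlead, Finset.prod_insert (by simp [h₁₂, h₁₃]),
    Finset.prod_pair h₂₃, mul_assoc (X - C w₁)]

theorem critical_points_not_in_all_subtriangles {z₀ z₁ z₂ z₃ w₁ w₂ w₃ : ℂ}
    (hS : SurroundsOrigin (z₁ - z₀) (z₂ - z₀) (z₃ - z₀)) {p : ℂ[X]}
    (hp : p = (X - C z₀) * (X - C z₁) * (X - C z₂) * (X - C z₃))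
    (he₁ : eval w₁ (derivative p) = 0) (he₂ : eval w₂ (derivative p) = 0)
    (he₃ : eval w₃ (derivative p) = 0) (hw₁ : w₁ ∈ interior (convexHull ℝ {z₀, z₁, z₂}))
    (hw₂ : w₂ ∈ interior (convexHull ℝ {z₀, z₂, z₃}))
    (hw₃ : w₃ ∈ interior (convexHull ℝ {z₀, z₃, z₁})) : False := by
  have hs₁ := inSector_sub_of_mem_interior_convexHull hS.1 hw₁
  have hs₂ := inSector_sub_of_mem_interior_convexHull hS.2.1 hw₂
  have hs₃ := inSector_sub_of_mem_interior_convexHull hS.2.2 hw₃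
  subst hp
  have hderiv := derivative_eq_of_monic_of_natDegree_eq_four (by monicity!) (by compute_degree!)
    (fun h => hs₁.ne hs₂ (by rw [h])) (fun h => hs₃.ne hs₁ (by rw [h]))
    (fun h => hs₂.ne hs₃ (by rw [h])) he₁ he₂ he₃
  have heval := congrArg (eval z₀) hderiv
  simp only [derivative_mul, derivative_sub, derivative_X, derivative_C, sub_zero, one_mul, mul_one,
    eval_add, eval_mul, eval_sub, eval_X, eval_C, sub_self, add_zero, zero_mul] at heval
  exact hS.mul_mul_ne_ofReal_mul hs₁ hs₂ hs₃ (r := 4⁻¹) (by norm_num)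
    (by push_cast; linear_combination heval / 4)

theorem exists_subtriangle_without_critical_point_general (z₀ z₁ z₂ z₃ : ℂ)
    (hd12 : z₁ ≠ z₂) (hd13 : z₁ ≠ z₃) (hd23 : z₂ ≠ z₃)
    (hint : z₀ ∈ interior (convexHull ℝ ({z₁, z₂, z₃} : Set ℂ)))
    (p : ℂ[X]) (hp : p = (X - C z₀) * (X - C z₁) * (X - C z₂) * (X - C z₃)) :
    (∀ w, eval w (derivative p) = 0 →
        w ∉ interior (convexHull ℝ ({z₀, z₁, z₂} : Set ℂ))) ∨
    (∀ w, eval w (derivative p) = 0 →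
        w ∉ interior (convexHull ℝ ({z₀, z₂, z₃} : Set ℂ))) ∨
    (∀ w, eval w (derivative p) = 0 →
        w ∉ interior (convexHull ℝ ({z₀, z₃, z₁} : Set ℂ))) := by
  by_contra! h
  obtain ⟨⟨w₁, he₁, hw₁⟩, ⟨w₂, he₂, hw₂⟩, ⟨w₃, he₃, hw₃⟩⟩ := h
  rcases surroundsOrigin_sub_or_of_mem_interior_convexHull hd12 hd23 hd13.symm hint with hS | hS
  · exact critical_points_not_in_all_subtriangles hS hp he₁ he₂ he₃ hw₁ hw₂ hw₃
  · refine critical_points_not_in_all_subtriangles hS (by rw [hp]; ring) he₃ he₂ he₁ ?_ ?_ ?_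
    · rwa [Set.pair_comm z₁ z₃]
    · rwa [Set.pair_comm z₃ z₂]
    · rwa [Set.pair_comm z₂ z₁]

/-- For a quartic `p` with four distinct roots `z₀, z₁, z₂, z₃` such that `z₀`
lies in the interior of the triangle `conv{z₁, z₂, z₃}`, at least one of the
three open sub-triangles `(z₀,z₁,z₂)`, `(z₀,z₂,z₃)`, `(z₀,z₃,z₁)` contains no
root of `p'`. -/
theorem exists_subtriangle_without_critical_point (z₀ z₁ z₂ z₃ : ℂ)
    (hd01 : z₀ ≠ z₁) (hd02 : z₀ ≠ z₂) (hd03 : z₀ ≠ z₃)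
    (hd12 : z₁ ≠ z₂) (hd13 : z₁ ≠ z₃) (hd23 : z₂ ≠ z₃)
    (hint : z₀ ∈ interior (convexHull ℝ ({z₁, z₂, z₃} : Set ℂ)))
    (p : ℂ[X]) (hp : p = (X - C z₀) * (X - C z₁) * (X - C z₂) * (X - C z₃)) :
    (∀ w, eval w (derivative p) = 0 →
        w ∉ interior (convexHull ℝ ({z₀, z₁, z₂} : Set ℂ))) ∨
    (∀ w, eval w (derivative p) = 0 →
        w ∉ interior (convexHull ℝ ({z₀, z₂, z₃} : Set ℂ))) ∨
    (∀ w, eval w (derivative p) = 0 →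
        w ∉ interior (convexHull ℝ ({z₀, z₃, z₁} : Set ℂ))) :=
  exists_subtriangle_without_critical_point_general z₀ z₁ z₂ z₃ hd12 hd13 hd23 hint p hp
end

section
/- Let p be a complex polynomial of degree 4 with distinct non-collinear roots. Every root of p' lies in the interior of the convex hull of the roots of p. -/
/-!
If `p'(w) = 0` while `p(w) ≠ 0` (the roots are simple), then `∑ 1 / (w - zᵢ) = 0`; conjugating,
`w` is the center of mass of the roots with the positive weights `1 / |w - zᵢ|²` (the explicit
form of the Gauss–Lucas theorem). Non-collinear roots span the plane affinely, and a center of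
mass with all weights positive of an affinely spanning finite set lies in the interior of its
convex hull.
-/

open Polynomial

theorem affineSpan_eq_top_of_not_collinear {k V P : Type*} [DivisionRing k] [AddCommGroup V]
    [Module k V] [AddTorsor V P] (hV : Module.finrank k V = 2) {s : Set P}
    (hs : ¬Collinear k s) : affineSpan k s = ⊤ := by
  have : FiniteDimensional k V := .of_finrank_eq_succ hV
  have hne : s.Nonempty := Set.nonempty_iff_ne_empty.2 fun h => hs (h ▸ collinear_empty k P)
  rw [AffineSubspace.affineSpan_eq_top_iff_vectorSpan_eq_top_of_nonempty k V P hne]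
  rw [collinear_iff_finrank_le_one, not_le] at hs
  exact Submodule.eq_top_of_finrank_eq <| hV ▸ le_antisymm (hV ▸ Submodule.finrank_le _) hs

theorem Finset.centerMass_add_weights {R E ι : Type*} [Field R] [AddCommGroup E] [Module R E]
    {t : Finset ι} {v u : ι → R} (z : ι → E) (hv : ∑ i ∈ t, v i ≠ 0) (hu : ∑ i ∈ t, u i ≠ 0) :
    t.centerMass (v + u) z = ((∑ i ∈ t, v i) / ∑ i ∈ t, (v + u) i) • t.centerMass v z
      + ((∑ i ∈ t, u i) / ∑ i ∈ t, (v + u) i) • t.centerMass u z := by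
  simp only [centerMass, Pi.add_apply, add_smul, sum_add_distrib, smul_add, smul_smul]
  congr 2 <;> field_simp

/-- Pick `e` in the interior of the hull, written with weights `u`; for small `δ > 0` the weights
`w - δ u` are still positive, which splits the center of mass of `w` as a convex combination of a
point of the hull and `e`, with positive weight on `e`. -/
theorem Finset.centerMass_id_mem_interior_convexHull {E : Type*} [NormedAddCommGroup E]
    [NormedSpace ℝ E] [FiniteDimensional ℝ E] {s : Finset E} {w : E → ℝ}
    (hw : ∀ x ∈ s, 0 < w x) (hs : affineSpan ℝ (s : Set E) = ⊤) :
    s.centerMass w id ∈ interior (convexHull ℝ (s : Set E)) := by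
  obtain ⟨e, he⟩ := interior_convexHull_nonempty_iff_affineSpan_eq_top.2 hs
  obtain ⟨u, -, hu₁, rfl⟩ := Finset.mem_convexHull.1 (interior_subset he)
  have hsne : s.Nonempty := Finset.nonempty_of_sum_ne_zero (hu₁.symm ▸ one_ne_zero)
  obtain ⟨δ, hδw, hδ⟩ : ∃ δ : ℝ, (∀ x ∈ s, δ * u x < w x) ∧ 0 < δ := by
    refine ((Filter.eventually_all_finset s).2 fun x hx => ?_).and self_mem_nhdsWithin
      |>.exists (f := nhdsWithin 0 (Set.Ioi 0))
    exact nhdsWithin_le_nhds <| Filter.Tendsto.eventually_lt_const (hw x hx)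
      ((continuous_mul_const (u x)).tendsto' 0 0 (zero_mul _))
  have hv : 0 < ∑ x ∈ s, (w - δ • u) x :=
    Finset.sum_pos (fun x hx => sub_pos.2 (hδw x hx)) hsne
  have hδu : 0 < ∑ x ∈ s, (δ • u) x := by
    simpa only [Pi.smul_apply, smul_eq_mul, ← Finset.mul_sum, hu₁, mul_one] using hδ
  have hW : 0 < ∑ x ∈ s, (w - δ • u + δ • u) x := by
    rw [sub_add_cancel]; exact Finset.sum_pos hw hsne
  have hy : s.centerMass (w - δ • u) id ∈ convexHull ℝ (s : Set E) :=
    s.centerMass_id_mem_convexHull (fun x hx => (sub_pos.2 (hδw x hx)).le) hv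
  rw [← sub_add_cancel w (δ • u), Finset.centerMass_add_weights id hv.ne' hδu.ne',
    Finset.centerMass_smul_left (hc := hδ.ne')]
  refine (convex_convexHull ℝ _).combo_self_interior_mem_interior hy he
    (div_nonneg hv.le hW.le) (div_pos hδu hW) ?_
  rw [← add_div, div_eq_one_iff_eq hW.ne']
  exact Finset.sum_add_distrib.symm

theorem Polynomial.mem_interior_convexHull_rootSet_of_eval_derivative_eq_zero {P : ℂ[X]}
    (hP : affineSpan ℝ (P.rootSet ℂ) = ⊤) {z : ℂ} (hPz : P.eval z ≠ 0)
    (hz : P.derivative.eval z = 0) :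
    z ∈ interior (convexHull ℝ (P.rootSet ℂ)) := by
  have hroots : P.rootSet ℂ = (P.roots.toFinset : Set ℂ) := by
    simp [rootSet_def, aroots_def]
  have hdeg : 0 < P.degree := by
    by_contra! h
    rw [eq_C_of_degree_le_zero h, rootSet_C, AffineSubspace.span_empty] at hP
    exact bot_ne_top hP
  rw [hroots] at hP ⊢
  rw [eq_centerMass_of_eval_derivative_eq_zero hdeg hz]
  refine Finset.centerMass_id_mem_interior_convexHull (fun x hx => ?_) hP
  obtain ⟨hP0, hPx⟩ := mem_roots'.1 (Multiset.mem_toFinset.1 hx)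
  have hzx : z - x ≠ 0 := sub_ne_zero.2 fun h => hPz (h ▸ hPx)
  rw [derivRootWeight, if_neg hPz]
  exact div_pos (Nat.cast_pos.2 ((rootMultiplicity_pos hP0).2 hPx)) (by positivity)

/-- Strict Gauss–Lucas for quartics: if `p` has four distinct, non-collinear
roots, then every root of `p'` lies in the interior of the convex hull of the
roots of `p`. -/
theorem strict_gauss_lucas_quartic (c : ℂ) (hc : c ≠ 0) (z : Fin 4 → ℂ)
    (hinj : Function.Injective z) (hcol : ¬ Collinear ℝ (Set.range z))
    (p : ℂ[X]) (hp : p = C c * ∏ i, (X - C (z i))) :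
    ∀ w, eval w (derivative p) = 0 →
      w ∈ interior (convexHull ℝ (Set.range z)) := by
  intro w hw
  have hsep : p.Separable :=
    hp ▸ (separable_prod_X_sub_C_iff.2 hinj).unit_mul (isUnit_C.2 hc.isUnit)
  have hroots : p.rootSet ℂ = Set.range z := by
    ext x
    simp [hp, mem_rootSet, hc, eval_prod, Finset.prod_eq_zero_iff, sub_eq_zero, X_ne_C,
      eq_comm (a := x)]
  have hspan : affineSpan ℝ (p.rootSet ℂ) = ⊤ :=
    hroots ▸ affineSpan_eq_top_of_not_collinear Complex.finrank_real_complex hcol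
  rw [← hroots]
  exact mem_interior_convexHull_rootSet_of_eval_derivative_eq_zero hspan
    (fun hpw => hsep.eval₂_derivative_ne_zero (RingHom.id ℂ) hpw hw) hw
end

section
/- Let p be a monic complex polynomial of degree n ≥ 4 whose roots are 0, 1, z₃, ..., zₙ, all simple, with 0 in the interior of the convex hull of the other roots, and assume no ray from 0 contains two distinct roots of p. Then there exist two angularly adjacent roots zᵢ, zⱼ (adjacent in cyclic order of arguments around 0) such that the open sector at 0 bounded by the rays through zᵢ and zⱼ contains no root of p'. -/
/-!
Suppose every sector between angularly consecutive roots `zᵢ` contained a critical point `ζᵢ`.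
Since `0` is interior to the convex hull, consecutive roots are less than `π` apart, so each such
sector is the convex cone spanned by its two roots. The sectors are disjoint, hence the `n - 1`
points `ζᵢ` are all the roots of `p'`, and comparing `p' = n ∏ (X - ζᵢ)` with `p'(0) = ∏ (-zᵢ)`
gives `∏ ζᵢ / zᵢ = 1 / n > 0`. But `arg (ζᵢ / zᵢ)` lies strictly between `0` and the gap from
`zᵢ` to the next root, and the gaps add up to `2π`, so the arguments add up to a number strictly
between `0` and `2π`: a contradiction.
-/

open Polynomial Real Finset

/-- The open angular sector at the origin spanned by the directions of `u` and
`v` (valid as the sector between the two rays when the angle is less than π). -/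
def openSector0 (u v : ℂ) : Set ℂ :=
  {w | ∃ s t : ℝ, 0 < s ∧ 0 < t ∧ w = s • u + t • v}

open Complex

section CcwDist

/-- The counterclockwise angle from `s` to `t`, for `s t ∈ [0, 2π)`. -/
noncomputable def ccwDist (s t : ℝ) : ℝ := if s ≤ t then t - s else t - s + 2 * π

variable {s t x : ℝ}

lemma ccwDist_mem_Ico (hs : s ∈ Set.Ico 0 (2 * π)) (ht : t ∈ Set.Ico 0 (2 * π)) :
    ccwDist s t ∈ Set.Ico 0 (2 * π) := by
  obtain ⟨hs₀, hs₁⟩ := hs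
  obtain ⟨ht₀, ht₁⟩ := ht
  unfold ccwDist
  split_ifs <;> constructor <;> linarith

lemma ccwDist_self (s : ℝ) : ccwDist s s = 0 := by simp [ccwDist]

lemma ccwDist_pos (hs : s < 2 * π) (ht : 0 ≤ t) (hst : s ≠ t) : 0 < ccwDist s t := by
  unfold ccwDist
  split_ifs with h
  · exact sub_pos.2 (lt_of_le_of_ne h hst)
  · linarith

lemma ccwDist_add_ccwDist (hs : s ∈ Set.Ico 0 (2 * π)) (hx : x ∈ Set.Ico 0 (2 * π))
    (ht : t ∈ Set.Ico 0 (2 * π)) (h : ccwDist s x + ccwDist x t < 2 * π) :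
    ccwDist s x + ccwDist x t = ccwDist s t := by
  obtain ⟨hs₀, hs₁⟩ := hs
  obtain ⟨hx₀, hx₁⟩ := hx
  obtain ⟨ht₀, ht₁⟩ := ht
  unfold ccwDist at *
  split_ifs at * <;> linarith

end CcwDist

lemma Real.Angle.injOn_coe_Ico : Set.InjOn ((↑) : ℝ → Real.Angle) (Set.Ico 0 (2 * π)) :=
  haveI : Fact (0 < 2 * π) := ⟨two_pi_pos⟩
  fun x hx y hy h => (AddCircle.coe_eq_coe_iff_of_mem_Ico (a := 0) (by simpa using hx)
    (by simpa using hy)).1 h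

section Arg2pi

lemma arg2pi_mem_Ico (z : ℂ) : arg2pi z ∈ Set.Ico 0 (2 * π) := by
  have := neg_pi_lt_arg z
  have := arg_le_pi z
  unfold arg2pi
  split_ifs <;> constructor <;> linarith [pi_pos]

lemma coe_arg2pi (z : ℂ) : (arg2pi z : Real.Angle) = arg z := by
  unfold arg2pi
  split_ifs <;> simp

lemma arg2pi_eq_of_coe {x : ℝ} {z : ℂ} (hx : x ∈ Set.Ico 0 (2 * π))
    (h : (x : Real.Angle) = arg z) : arg2pi z = x :=
  Real.Angle.injOn_coe_Ico (arg2pi_mem_Ico z) hx (by rw [coe_arg2pi, h])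

lemma arg2pi_div {a b : ℂ} (ha : a ≠ 0) (hb : b ≠ 0) :
    arg2pi (b / a) = ccwDist (arg2pi a) (arg2pi b) := by
  refine arg2pi_eq_of_coe (ccwDist_mem_Ico (arg2pi_mem_Ico a) (arg2pi_mem_Ico b)) ?_
  rw [arg_div_coe_angle hb ha, ← coe_arg2pi, ← coe_arg2pi, ← Real.Angle.coe_sub]
  unfold ccwDist
  split_ifs <;> simp

lemma im_pos_iff_arg2pi_mem_Ioo {x : ℂ} : 0 < x.im ↔ arg2pi x ∈ Set.Ioo 0 π := by
  have harg : 0 < x.im ↔ arg x ∈ Set.Ioo 0 π := by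
    constructor
    · intro h
      refine ⟨lt_of_le_of_ne (arg_nonneg_iff.2 h.le) fun h' => ?_, arg_lt_pi_iff.2 (Or.inr h.ne')⟩
      exact h.ne' (arg_eq_zero_iff.1 h'.symm).2
    · rintro ⟨h₀, h₁⟩
      refine lt_of_le_of_ne (arg_nonneg_iff.1 h₀.le) fun h => ?_
      rcases le_or_gt 0 x.re with hre | hre
      · exact h₀.ne' (arg_eq_zero_iff.2 ⟨hre, h.symm⟩)
      · exact h₁.ne (arg_eq_pi_iff.2 ⟨hre, h.symm⟩)
  rw [harg]
  unfold arg2pi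
  split_ifs with h
  · rfl
  · simp only [Set.mem_Ioo, not_le] at h ⊢
    constructor <;> intro h' <;> linarith [h'.1, h'.2, neg_pi_lt_arg x]

lemma ccwDist_arg2pi_lt_of_mem_openSector0 {a b w : ℂ} (ha : a ≠ 0) (hab : 0 < (b / a).im)
    (hw : w ∈ openSector0 a b) :
    w ≠ 0 ∧ 0 < ccwDist (arg2pi a) (arg2pi w) ∧
      ccwDist (arg2pi a) (arg2pi w) < ccwDist (arg2pi a) (arg2pi b) := by
  obtain ⟨s, t, hs, ht, rfl⟩ := hw
  set w := s • a + t • b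
  have hwa : w / a = s + t * (b / a) := by
    simp only [w, Complex.real_smul]; field_simp
  have hwa_im : 0 < (w / a).im := by rw [hwa]; simp; positivity
  -- `b / w = c / (s + t c)` with `c = b / a`, whose imaginary part is `s c.im / |s + t c|²`
  have hbw_im : 0 < (b / w).im := by
    have hN : 0 < normSq (w / a) := normSq_pos.2 fun h => by simp [h] at hwa_im
    rw [← div_div_div_cancel_right₀ ha b w, div_im]
    rw [hwa] at hN ⊢
    have : (b / a).im * (s + t * (b / a)).re / normSq (s + t * (b / a))
        - (b / a).re * (s + t * (b / a)).im / normSq (s + t * (b / a))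
        = s * (b / a).im / normSq (s + t * (b / a)) := by simp; ring
    rw [this]; positivity
  have hw : w ≠ 0 := fun h => by simp [h] at hwa_im
  have hb : b ≠ 0 := fun h => by simp [h] at hab
  rw [im_pos_iff_arg2pi_mem_Ioo, arg2pi_div ha hw] at hwa_im
  rw [im_pos_iff_arg2pi_mem_Ioo, arg2pi_div hw hb] at hbw_im
  rw [im_pos_iff_arg2pi_mem_Ioo, arg2pi_div ha hb] at hab
  have hsum := ccwDist_add_ccwDist (arg2pi_mem_Ico a) (arg2pi_mem_Ico w) (arg2pi_mem_Ico b)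
    (by linarith [hwa_im.2, hbw_im.2])
  exact ⟨hw, hwa_im.1, by linarith [hbw_im.1]⟩

lemma coe_sum_arg2pi {ι : Type*} (s : Finset ι) {x : ι → ℂ} (hx : ∀ i ∈ s, x i ≠ 0) :
    ((∑ i ∈ s, arg2pi (x i) : ℝ) : Real.Angle) = arg (∏ i ∈ s, x i) := by
  induction s using Finset.cons_induction with
  | empty => simp
  | cons a s ha ih =>
    rw [Finset.forall_mem_cons] at hx
    rw [Finset.sum_cons, Finset.prod_cons, Real.Angle.coe_add, ih hx.2, coe_arg2pi,
      arg_mul_coe_angle hx.1 (Finset.prod_ne_zero_iff.2 hx.2)]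

end Arg2pi

lemma exists_im_div_pos_of_zero_mem_interior {S : Set ℂ}
    (h : (0 : ℂ) ∈ interior (convexHull ℝ S)) {a : ℂ} (ha : a ≠ 0) : ∃ w ∈ S, 0 < (w / a).im := by
  by_contra! hS
  let f : ℂ →ₗ[ℝ] ℝ := imLm.comp (LinearMap.mulLeft ℝ a⁻¹)
  have hf : ∀ w, f w = (w / a).im := fun w => by simp [f, div_eq_inv_mul]
  have hH : convexHull ℝ S ⊆ f ⁻¹' Set.Iic 0 :=
    convexHull_min (fun w hw => by simpa [hf] using hS w hw) ((convex_Iic 0).linear_preimage f)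
  have hpath :
      Filter.Tendsto (fun t : ℝ => (t : ℂ) * I * a) (nhdsWithin 0 (Set.Ioi 0)) (nhds 0) := by
    have : Continuous fun t : ℝ => (t : ℂ) * I * a := by fun_prop
    simpa using (this.tendsto 0).mono_left nhdsWithin_le_nhds
  obtain ⟨t, ht, htpos⟩ :=
    ((hpath.eventually (mem_interior_iff_mem_nhds.1 (interior_mono hH h))).and
      self_mem_nhdsWithin).exists
  have : ((t : ℂ) * I * a / a).im ≤ 0 := by simpa [hf] using ht
  simp [ha] at this
  linarith [show (0 : ℝ) < t from htpos]

section CcwNext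

variable {ι : Type*} {θ : ι → ℝ} {nxt : ι → ι}

def IsCcwNext (θ : ι → ℝ) (nxt : ι → ι) : Prop :=
  ∀ i, nxt i ≠ i ∧ ∀ j, j ≠ i → ccwDist (θ i) (θ (nxt i)) ≤ ccwDist (θ i) (θ j)

lemma exists_isCcwNext [Fintype ι] [Nontrivial ι] (θ : ι → ℝ) : ∃ nxt, IsCcwNext θ nxt := by
  classical
  have (i : ι) : ∃ j, j ≠ i ∧ ∀ k, k ≠ i → ccwDist (θ i) (θ j) ≤ ccwDist (θ i) (θ k) := by
    obtain ⟨j, hj, hmin⟩ := (Finset.univ.erase i).exists_min_image (fun k => ccwDist (θ i) (θ k))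
      (Finset.univ_nontrivial.erase_nonempty (a := i))
    exact ⟨j, (Finset.mem_erase.1 hj).1, fun k hk => hmin k (by simp [hk])⟩
  choose nxt hnxt using this
  exact ⟨nxt, hnxt⟩

lemma IsCcwNext.ccwDist_pos (hnxt : IsCcwNext θ nxt) (hθ : ∀ i, θ i ∈ Set.Ico 0 (2 * π))
    (hinj : Function.Injective θ) (i : ι) : 0 < ccwDist (θ i) (θ (nxt i)) :=
  _root_.ccwDist_pos (hθ i).2 (hθ _).1 (hinj.ne (hnxt i).1.symm)

lemma IsCcwNext.eq_of_ccwDist_le (hnxt : IsCcwNext θ nxt) (hθ : ∀ i, θ i ∈ Set.Ico 0 (2 * π))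
    {x : ℝ} (hx : x ∈ Set.Ico 0 (2 * π))
    {i j : ι} (hi₀ : 0 < ccwDist (θ i) x) (hi : ccwDist (θ i) x ≤ ccwDist (θ i) (θ (nxt i)))
    (hj₀ : 0 < ccwDist (θ j) x) (hj : ccwDist (θ j) x ≤ ccwDist (θ j) (θ (nxt j))) : i = j := by
  by_contra hij
  have hij' := (hnxt i).2 j (Ne.symm hij)
  have hji' := (hnxt j).2 i hij
  obtain ⟨hi₁, hi₂⟩ := hθ i
  obtain ⟨hj₁, hj₂⟩ := hθ j
  obtain ⟨hx₁, hx₂⟩ := hx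
  unfold ccwDist at *
  split_ifs at * <;> linarith

lemma IsCcwNext.injective (hnxt : IsCcwNext θ nxt) (hθ : ∀ i, θ i ∈ Set.Ico 0 (2 * π))
    (hinj : Function.Injective θ) : Function.Injective nxt := by
  intro i j h
  have hpos := hnxt.ccwDist_pos hθ hinj
  exact hnxt.eq_of_ccwDist_le hθ (hθ (nxt i)) (hpos i) le_rfl
    (h ▸ hpos j) (h ▸ le_rfl)

lemma IsCcwNext.sum_ccwDist [Fintype ι] [Nonempty ι] (hnxt : IsCcwNext θ nxt)
    (hθ : ∀ i, θ i ∈ Set.Ico 0 (2 * π)) (hinj : Function.Injective θ) :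
    ∑ i, ccwDist (θ i) (θ (nxt i)) = 2 * π := by
  classical
  obtain ⟨i₀, -, hmax⟩ := Finset.univ.exists_max_image θ Finset.univ_nonempty
  have hmax' (i) (hi : i ≠ i₀) : θ i < θ i₀ :=
    lt_of_le_of_ne (hmax i (Finset.mem_univ i)) (hinj.ne hi)
  -- only the step out of the largest angle wraps around
  have hstep (i) : ccwDist (θ i) (θ (nxt i)) = θ (nxt i) - θ i + if i = i₀ then 2 * π else 0 := by
    unfold ccwDist
    by_cases hi : i = i₀
    · subst hi
      rw [if_neg (not_le.2 (hmax' _ (hnxt i).1)), if_pos rfl]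
    · have hle : θ i ≤ θ (nxt i) := by
        by_contra h
        have hmin := (hnxt i).2 i₀ (Ne.symm hi)
        unfold ccwDist at hmin
        rw [if_neg h, if_pos (hmax' i hi).le] at hmin
        linarith [(hθ i₀).2, (hθ (nxt i)).1]
      rw [if_pos hle, if_neg hi, add_zero]
  rw [Finset.sum_congr rfl fun i _ => hstep i, Finset.sum_add_distrib, Finset.sum_sub_distrib,
    (hnxt.injective hθ hinj).bijective_of_finite.sum_comp θ, sub_self, zero_add,
    Finset.sum_ite_eq' Finset.univ, if_pos (Finset.mem_univ _)]

end CcwNext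

theorem eq_C_mul_prod_X_sub_C_of_isRoot {R ι : Type*} [CommRing R] [IsDomain R] [Fintype ι]
    {q : R[X]} (hq : q ≠ 0) (hdeg : q.natDegree ≤ Fintype.card ι) {ζ : ι → R}
    (hζ : Function.Injective ζ) (hroot : ∀ i, q.IsRoot (ζ i)) :
    q = C (q.coeff (Fintype.card ι)) * ∏ i, (X - C (ζ i)) := by
  set s : Multiset R := Finset.univ.val.map ζ
  have hs : s ≤ q.roots := (Multiset.le_iff_subset (Finset.univ.nodup.map hζ)).2 fun a ha => by
    obtain ⟨i, -, rfl⟩ := Multiset.mem_map.1 ha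
    exact (mem_roots hq).2 (hroot i)
  have hs_card : Multiset.card s = Fintype.card ι := by simp [s]
  have hroots : s = q.roots :=
    Multiset.eq_of_le_of_card_le hs (hs_card ▸ (card_roots' q).trans hdeg)
  have hdeg' : q.natDegree = Fintype.card ι :=
    le_antisymm hdeg (hs_card ▸ hroots ▸ card_roots' q)
  have := C_leadingCoeff_mul_prod_multiset_X_sub_C (hroots ▸ hs_card.trans hdeg'.symm)
  rw [leadingCoeff, hdeg', ← hroots, Multiset.map_map] at this
  rw [Finset.prod_eq_multiset_prod]
  exact this.symm

theorem card_add_one_mul_prod_eq_prod_of_isRoot_derivative {K ι : Type*} [Field K] [CharZero K]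
    [Fintype ι] (z : ι → K) {ζ : ι → K} (hζ : Function.Injective ζ)
    (hroot : ∀ i, (derivative (X * ∏ j, (X - C (z j)))).IsRoot (ζ i)) :
    (Fintype.card ι + 1 : K) * ∏ i, ζ i = ∏ i, z i := by
  set m := Fintype.card ι
  set q := derivative (X * ∏ j, (X - C (z j)))
  have hmonic : (X * ∏ j, (X - C (z j))).Monic :=
    monic_X.mul (monic_prod_of_monic _ _ fun j _ => monic_X_sub_C (z j))
  have hdeg : (X * ∏ j, (X - C (z j))).natDegree = m + 1 := by
    rw [natDegree_mul X_ne_zero (monic_prod_of_monic _ _ fun j _ => monic_X_sub_C (z j)).ne_zero,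
      natDegree_X, natDegree_finsetProd_X_sub_C_eq_card, Finset.card_univ, add_comm]
  have hcoeff : q.coeff m = m + 1 := by
    rw [coeff_derivative, ← hdeg, hmonic.coeff_natDegree, one_mul]
  have hq0 : q ≠ 0 := fun h => Nat.cast_add_one_ne_zero m (by rw [← hcoeff, h, coeff_zero])
  have hq := eq_C_mul_prod_X_sub_C_of_isRoot hq0
    ((natDegree_derivative_le _).trans (by omega)) hζ hroot
  have heval : eval 0 q = ∏ i, -z i := by simp [q, derivative_mul, eval_prod]
  rw [hq, hcoeff] at heval
  simp only [eval_mul, eval_C, eval_prod, eval_sub, eval_X, zero_sub, Finset.prod_neg] at heval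
  rw [mul_left_comm] at heval
  exact mul_left_cancel₀ (pow_ne_zero _ (neg_ne_zero.2 one_ne_zero)) heval

section Configuration

variable {ι : Type*} {z : ι → ℂ} {nxt : ι → ι}

lemma im_div_pos_of_isCcwNext (hz : ∀ i, z i ≠ 0) (hray : Function.Injective fun i => arg2pi (z i))
    (hint : (0 : ℂ) ∈ interior (convexHull ℝ (Set.range z)))
    (hnxt : IsCcwNext (fun i => arg2pi (z i)) nxt) (i : ι) : 0 < (z (nxt i) / z i).im := by
  obtain ⟨_, ⟨k, rfl⟩, hk⟩ := exists_im_div_pos_of_zero_mem_interior hint (hz i)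
  have hki : k ≠ i := by rintro rfl; simp [hz k] at hk
  rw [im_pos_iff_arg2pi_mem_Ioo, arg2pi_div (hz i) (hz k)] at hk
  rw [im_pos_iff_arg2pi_mem_Ioo, arg2pi_div (hz i) (hz (nxt i))]
  exact ⟨hnxt.ccwDist_pos (fun j => arg2pi_mem_Ico (z j)) hray i,
    ((hnxt i).2 k hki).trans_lt hk.2⟩

lemma not_mem_openSector0_of_isCcwNext (hz : ∀ i, z i ≠ 0)
    (hnxt : IsCcwNext (fun i => arg2pi (z i)) nxt) {i : ι} (hsec : 0 < (z (nxt i) / z i).im)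
    (k : ι) : z k ∉ openSector0 (z i) (z (nxt i)) := fun hk => by
  obtain ⟨-, hpos, hlt⟩ := ccwDist_arg2pi_lt_of_mem_openSector0 (hz i) hsec hk
  have hki : k ≠ i := by rintro rfl; simp [ccwDist_self] at hpos
  exact (hlt.trans_le ((hnxt i).2 k hki)).false

variable (hz : ∀ i, z i ≠ 0) (hnxt : IsCcwNext (fun i => arg2pi (z i)) nxt)
  (hsec : ∀ i, 0 < (z (nxt i) / z i).im) {ζ : ι → ℂ}
  (hζ : ∀ i, ζ i ∈ openSector0 (z i) (z (nxt i)))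
include hz hnxt hsec hζ

lemma injective_of_mem_openSector0_of_isCcwNext : Function.Injective ζ := fun i j h => by
  choose _ hpos hlt using fun i => ccwDist_arg2pi_lt_of_mem_openSector0 (hz i) (hsec i) (hζ i)
  exact hnxt.eq_of_ccwDist_le (fun i => arg2pi_mem_Ico (z i)) (arg2pi_mem_Ico (ζ i)) (hpos i)
    (hlt i).le (h ▸ hpos j) (h ▸ (hlt j).le)

lemma sum_arg2pi_div_mem_Ioo_of_isCcwNext [Fintype ι] [Nonempty ι]
    (hray : Function.Injective fun i => arg2pi (z i)) :
    ∑ i, arg2pi (ζ i / z i) ∈ Set.Ioo 0 (2 * π) := by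
  choose hζ0 hpos hlt using fun i => ccwDist_arg2pi_lt_of_mem_openSector0 (hz i) (hsec i) (hζ i)
  simp only [arg2pi_div (hz _) (hζ0 _)]
  refine ⟨Finset.sum_pos (fun i _ => hpos i) Finset.univ_nonempty, ?_⟩
  rw [← hnxt.sum_ccwDist (fun i => arg2pi_mem_Ico (z i)) hray]
  exact Finset.sum_lt_sum_of_nonempty Finset.univ_nonempty fun i _ => hlt i

end Configuration

/-- Let `p` be monic of degree `n ≥ 4` with simple roots `0, z₁, …, z_{n-1}`
(where `z₁ = 1`), `0` interior to the convex hull of the nonzero roots, and no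
two roots on the same ray from `0`. Then there are two angularly adjacent roots
`zᵢ, zⱼ` such that the open sector at `0` bounded by the rays through them
contains no root of `p'` (adjacency: the sector contains no root of `p`). -/
theorem exists_sector_without_critical_point (n : ℕ) (hn : 4 ≤ n)
    (z : Fin (n - 1) → ℂ) (hz0 : ∀ i, z i ≠ 0)
    (hray : ∀ i j, arg2pi (z i) = arg2pi (z j) → i = j)
    (hint : (0 : ℂ) ∈ interior (convexHull ℝ (Set.range z)))
    (p : ℂ[X]) (hp : p = X * ∏ i, (X - C (z i))) :
    ∃ i j : Fin (n - 1), i ≠ j ∧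
      (∀ k, z k ∉ openSector0 (z i) (z j)) ∧
      (∀ w, eval w (derivative p) = 0 → w ∉ openSector0 (z i) (z j)) := by
  subst hp
  by_contra! hcon
  have : Nontrivial (Fin (n - 1)) := Fin.nontrivial_iff_two_le.2 (by omega)
  obtain ⟨nxt, hnxt⟩ := exists_isCcwNext fun i => arg2pi (z i)
  have hsec := im_div_pos_of_isCcwNext hz0 hray hint hnxt
  choose ζ hζroot hζmem using fun i =>
    hcon i (nxt i) (hnxt i).1.symm (not_mem_openSector0_of_isCcwNext hz0 hnxt (hsec i))
  have hζ0 (i) : ζ i ≠ 0 := (ccwDist_arg2pi_lt_of_mem_openSector0 (hz0 i) (hsec i) (hζmem i)).1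
  have hsum := sum_arg2pi_div_mem_Ioo_of_isCcwNext hz0 hnxt hsec hζmem hray
  have hprod : ∏ i, (ζ i / z i) = ((Fintype.card (Fin (n - 1)) + 1 : ℝ)⁻¹ : ℝ) := by
    rw [Finset.prod_div_distrib, ← card_add_one_mul_prod_eq_prod_of_isRoot_derivative z
      (injective_of_mem_openSector0_of_isCcwNext hz0 hnxt hsec hζmem) hζroot,
      div_mul_cancel_right₀ (Finset.prod_ne_zero_iff.2 fun i _ => hζ0 i)]
    simp
  have hsum_zero : ((∑ i, arg2pi (ζ i / z i) : ℝ) : Real.Angle) = (0 : ℝ) := by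
    rw [coe_sum_arg2pi _ fun i _ => div_ne_zero (hζ0 i) (hz0 i), hprod,
      arg_ofReal_of_nonneg (by positivity)]
  exact hsum.1.ne' (Real.Angle.injOn_coe_Ico (Set.Ioo_subset_Ico_self hsum)
    ⟨le_rfl, two_pi_pos⟩ hsum_zero)
end

section
/- Let a, b be nonzero complex numbers such that 0 lies strictly inside the triangle with vertices 1, a, b, and let w be a root of the derivative of p(z) = z(z−1)(z−a)(z−b). Then w ≠ 0, w ≠ 1, w ≠ a, w ≠ b, and w lies strictly inside the triangle with vertices 1, a, b. -/
open Polynomial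

lemma pair_span_ne_top (x y : ℂ) : affineSpan ℝ ({x, y} : Set ℂ) ≠ ⊤ := by
  intro h
  have hc : Collinear ℝ ({x, y} : Set ℂ) := collinear_pair ℝ x y
  rw [Collinear, ← direction_affineSpan, h, AffineSubspace.direction_top] at hc
  have := Complex.rank_real_complex
  rw [← rank_top ℝ ℂ] at this
  rw [this] at hc
  norm_num at hc

/-- If `0` lies strictly inside the triangle with vertices `1, a, b` and `w` is
a root of the derivative of `p(z) = z(z-1)(z-a)(z-b)`, then `w` is distinct
from all roots of `p` and lies strictly inside the triangle `conv{1, a, b}`. -/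
theorem critical_point_strictly_inside (a b w : ℂ) (ha : a ≠ 0) (hb : b ≠ 0)
    (hint : (0 : ℂ) ∈ interior (convexHull ℝ ({1, a, b} : Set ℂ)))
    (p : ℂ[X]) (hp : p = X * (X - C 1) * (X - C a) * (X - C b))
    (hw : eval w (derivative p) = 0) :
    w ≠ 0 ∧ w ≠ 1 ∧ w ≠ a ∧ w ≠ b ∧
      w ∈ interior (convexHull ℝ ({1, a, b} : Set ℂ)) := by
  -- distinctness of a, b, 1
  have hspan : affineSpan ℝ ({1, a, b} : Set ℂ) = ⊤ :=
    interior_convexHull_nonempty_iff_affineSpan_eq_top.mp ⟨0, hint⟩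
  have ha1 : a ≠ 1 := by
    rintro rfl
    exact pair_span_ne_top 1 b (by simpa using hspan)
  have hb1 : b ≠ 1 := by
    rintro rfl
    exact pair_span_ne_top 1 a (by rw [Set.pair_comm a 1, Set.insert_idem] at hspan; simpa using hspan)
  have hab : a ≠ b := by
    rintro rfl
    exact pair_span_ne_top 1 a (by simpa using hspan)
  -- derivative identity
  have key : (w-1)*(w-a)*(w-b) + w*(w-a)*(w-b) + w*(w-1)*(w-b) + w*(w-1)*(w-a) = 0 := by
    subst hp
    simp only [derivative_mul, derivative_X, derivative_sub, derivative_C, derivative_one,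
      eval_mul, eval_add, eval_sub, eval_X, eval_C, eval_one, one_mul, mul_one, sub_zero] at hw
    linear_combination hw
  have hw0 : w ≠ 0 := by
    rintro rfl
    apply mul_ne_zero ha hb
    linear_combination -key
  have hw1 : w ≠ 1 := by
    rintro rfl
    have : (1 - a) * (1 - b) = 0 := by linear_combination key
    rcases mul_eq_zero.mp this with h | h
    · exact ha1 (by linear_combination -h)
    · exact hb1 (by linear_combination -h)
  have hwa : w ≠ a := by
    intro heq
    rw [heq] at key
    have : a * (a - 1) * (a - b) = 0 := by linear_combination key
    rcases mul_eq_zero.mp this with h | h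
    · rcases mul_eq_zero.mp h with h | h
      · exact ha h
      · exact ha1 (by linear_combination h)
    · exact hab (by linear_combination h)
  have hwb : w ≠ b := by
    intro heq
    rw [heq] at key
    have : b * (b - 1) * (b - a) = 0 := by linear_combination key
    rcases mul_eq_zero.mp this with h | h
    · rcases mul_eq_zero.mp h with h | h
      · exact hb h
      · exact hb1 (by linear_combination h)
    · exact hab (by linear_combination -h)
  refine ⟨hw0, hw1, hwa, hwb, ?_⟩
  -- sum of reciprocals vanishes
  have h0 : w ≠ 0 := hw0
  have h1 : w - 1 ≠ 0 := sub_ne_zero.mpr hw1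
  have h2 : w - a ≠ 0 := sub_ne_zero.mpr hwa
  have h3 : w - b ≠ 0 := sub_ne_zero.mpr hwb
  have hrecip : w⁻¹ + (w-1)⁻¹ + (w-a)⁻¹ + (w-b)⁻¹ = 0 := by
    field_simp
    linear_combination key
  -- conjugate and rewrite via normSq
  have hconj : (starRingEnd ℂ w)⁻¹ + (starRingEnd ℂ (w-1))⁻¹
      + (starRingEnd ℂ (w-a))⁻¹ + (starRingEnd ℂ (w-b))⁻¹ = 0 := by
    have := congrArg (starRingEnd ℂ) hrecip
    simpa [map_add, map_inv₀] using this
  set t0 : ℝ := (Complex.normSq w)⁻¹ with ht0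
  set t1 : ℝ := (Complex.normSq (w-1))⁻¹ with ht1
  set t2 : ℝ := (Complex.normSq (w-a))⁻¹ with ht2
  set t3 : ℝ := (Complex.normSq (w-b))⁻¹ with ht3
  have hp0 : 0 < t0 := inv_pos.mpr (Complex.normSq_pos.mpr h0)
  have hp1 : 0 < t1 := inv_pos.mpr (Complex.normSq_pos.mpr h1)
  have hp2 : 0 < t2 := inv_pos.mpr (Complex.normSq_pos.mpr h2)
  have hp3 : 0 < t3 := inv_pos.mpr (Complex.normSq_pos.mpr h3)
  have hinv : ∀ z : ℂ, z ≠ 0 → (starRingEnd ℂ z)⁻¹ = ((Complex.normSq z : ℝ) : ℂ)⁻¹ * z := by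
    intro z hz
    rw [Complex.inv_def, Complex.normSq_conj, Complex.conj_conj, Complex.ofReal_inv, mul_comm]
  rw [hinv w h0, hinv _ h1, hinv _ h2, hinv _ h3] at hconj
  -- key linear identity with real positive weights
  have hE : ((t0:ℂ) + t1 + t2 + t3) * w = (t1:ℂ) * 1 + (t2:ℂ) * a + (t3:ℂ) * b := by
    rw [ht0, ht1, ht2, ht3]
    push_cast
    linear_combination hconj
  clear_value t0 t1 t2 t3
  clear ht0 ht1 ht2 ht3 hconj hrecip key hw
  have hT23 : 0 < t2 + t3 := by positivity
  have hT123 : 0 < t1 + t2 + t3 := by positivity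
  have hTpos : 0 < t0 + t1 + t2 + t3 := by positivity
  have hconv : Convex ℝ (convexHull ℝ ({1, a, b} : Set ℂ)) := convex_convexHull ℝ _
  have h1S : (1:ℂ) ∈ convexHull ℝ ({1, a, b} : Set ℂ) := subset_convexHull ℝ _ (by simp)
  have haS : a ∈ convexHull ℝ ({1, a, b} : Set ℂ) := subset_convexHull ℝ _ (by simp)
  have hbS : b ∈ convexHull ℝ ({1, a, b} : Set ℂ) := subset_convexHull ℝ _ (by simp)
  have hmS : (t2/(t2+t3)) • a + (t3/(t2+t3)) • b ∈ convexHull ℝ ({1, a, b} : Set ℂ) :=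
    hconv haS hbS (by positivity) (by positivity) (by field_simp)
  have hdS : (t1/(t1+t2+t3)) • 1 + ((t2+t3)/(t1+t2+t3)) • ((t2/(t2+t3)) • a + (t3/(t2+t3)) • b)
      ∈ convexHull ℝ ({1, a, b} : Set ℂ) :=
    hconv h1S hmS (by positivity) (by positivity) (by field_simp; ring)
  have hwcombo : w = (t0/(t0+t1+t2+t3)) • (0:ℂ) + ((t1+t2+t3)/(t0+t1+t2+t3)) •
      ((t1/(t1+t2+t3)) • 1 + ((t2+t3)/(t1+t2+t3)) • ((t2/(t2+t3)) • a + (t3/(t2+t3)) • b)) := by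
    simp only [Complex.real_smul, Complex.ofReal_div, Complex.ofReal_add]
    have hTne : ((t0:ℂ) + t1 + t2 + t3) ≠ 0 := by norm_cast; exact hTpos.ne'
    have h23ne : ((t2:ℂ) + t3) ≠ 0 := by norm_cast; exact hT23.ne'
    have h123ne : ((t1:ℂ) + t2 + t3) ≠ 0 := by norm_cast; exact hT123.ne'
    have hw' : w = ((t1:ℂ)*1 + t2*a + t3*b) / ((t0:ℂ)+t1+t2+t3) := by
      rw [eq_div_iff hTne]
      linear_combination hE
    rw [hw']
    rw [div_eq_iff hTne]
    field_simp
    ring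
  rw [hwcombo]
  exact hconv.combo_interior_self_mem_interior hint hdS (by positivity)
    (by positivity) (by field_simp; ring)
end

section
/- Let z₀ lie strictly inside the triangle with vertices z₁, z₂, z₃ in ℂ. Then the three open sectors at z₀ determined by the rays from z₀ through z₁, z₂, z₃ intersected with the open triangle (z₁,z₂,z₃) are exactly the interiors of the three triangles (z₀,z₁,z₂), (z₀,z₂,z₃), (z₀,z₃,z₁). -/
open Set Module

/-- The open angular sector at `z₀` spanned by the directions toward `u` and `v`. -/
def openSector (z₀ u v : ℂ) : Set ℂ :=
  {w | ∃ s t : ℝ, 0 < s ∧ 0 < t ∧ w = z₀ + s • (u - z₀) + t • (v - z₀)}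

/-- Any 3 points of `ℂ` whose affine span is everything are affinely independent. -/
lemma affineIndependent_of_span_top {q : Fin 3 → ℂ}
    (hq : affineSpan ℝ (Set.range q) = ⊤) : AffineIndependent ℝ q := by
  have h1 : vectorSpan ℝ (Set.range q) = ⊤ := by
    rw [← direction_affineSpan, hq]
    exact AffineSubspace.direction_top ℝ ℂ ℂ
  rw [affineIndependent_iff_finrank_vectorSpan_eq ℝ q (n := 2) (by simp),
    h1, finrank_top, Complex.finrank_real_complex]

/-- Any 3 affinely independent points of `ℂ` span everything. -/
lemma span_top_of_affineIndependent {q : Fin 3 → ℂ}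
    (hq : AffineIndependent ℝ q) : affineSpan ℝ (Set.range q) = ⊤ :=
  hq.affineSpan_eq_top_iff_card_eq_finrank_add_one.mpr
    (by simp [Complex.finrank_real_complex])

lemma combo_eq (z₀ u v : ℂ) (s t : ℝ) :
    z₀ + s • (u - z₀) + t • (v - z₀) = (1 - s - t) • z₀ + s • u + t • v := by
  module

lemma coord_of_combo (b : AffineBasis (Fin 3) ℝ ℂ) (m : Fin 3) (q : Fin 3 → ℂ)
    (v : Fin 3 → ℝ) (hv : ∑ i, v i = 1) :
    b.coord m (Finset.univ.affineCombination ℝ q v) =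
      v 0 * b.coord m (q 0) + v 1 * b.coord m (q 1) + v 2 * b.coord m (q 2) := by
  rw [Finset.map_affineCombination _ q v hv,
    Finset.univ.affineCombination_eq_linear_combination _ _ hv]
  simp [Fin.sum_univ_three]

/-- The key lemma: for a basis `b` of the plane and a point `z₀` with all barycentric
coordinates positive, the sector towards `b 0`, `b 1` intersected with the interior of
the triangle is the interior of the sub-triangle. -/
lemma key (b : AffineBasis (Fin 3) ℝ ℂ) (z₀ : ℂ)
    (h : ∀ i, 0 < b.coord i z₀) :
    openSector z₀ (b 0) (b 1) ∩ interior (convexHull ℝ (Set.range b)) =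
      interior (convexHull ℝ ({z₀, b 0, b 1} : Set ℂ)) := by
  classical
  have hb01 : b 0 ≠ b 1 := fun hEq => by
    have h01 : (0 : Fin 3) = 1 := b.ind.injective hEq
    simp at h01
  -- affine independence of `![z₀, b 0, b 1]`
  have hindep : AffineIndependent ℝ ![z₀, b 0, b 1] := by
    rw [affineIndependent_iff_not_collinear_set]
    intro hcol
    have hz : z₀ ∈ line[ℝ, b 0, b 1] :=
      hcol.mem_affineSpan_of_mem_of_ne (by simp) (by simp) (by simp) hb01
    have hz' : (z₀ - b 0) +ᵥ (b 0) ∈ line[ℝ, b 0, b 1] := by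
      simpa using hz
    obtain ⟨r, hr⟩ := vadd_left_mem_affineSpan_pair.1 hz'
    have hz0 : z₀ = AffineMap.lineMap (b 0) (b 1) r := by
      rw [AffineMap.lineMap_apply]
      rw [vsub_eq_sub] at hr
      simp only [vsub_eq_sub, vadd_eq_add, hr]
      ring
    have hcz : b.coord 2 z₀ = 0 := by
      rw [hz0, AffineMap.apply_lineMap]
      simp [AffineBasis.coord_apply, AffineMap.lineMap_apply]
    have := h 2
    rw [hcz] at this
    exact lt_irrefl _ this
  -- the basis of the sub-triangle
  let c : AffineBasis (Fin 3) ℝ ℂ :=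
    ⟨![z₀, b 0, b 1], hindep, span_top_of_affineIndependent hindep⟩
  have hc : ⇑c = ![z₀, b 0, b 1] := rfl
  have hcrange : Set.range c = ({z₀, b 0, b 1} : Set ℂ) := by
    rw [hc]
    ext x
    simp [Matrix.range_cons, Matrix.range_empty]
    tauto
  have hbc0 : b.coord 2 (b 0) = 0 := by simp [AffineBasis.coord_apply]
  have hbc1 : b.coord 2 (b 1) = 0 := by simp [AffineBasis.coord_apply]
  ext w
  rw [← hcrange, b.interior_convexHull, c.interior_convexHull]
  constructor
  · rintro ⟨⟨s, t, hs, ht, hw⟩, hwint⟩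
    -- `w` as an affine combination of the sub-triangle vertices
    set v : Fin 3 → ℝ := ![1 - s - t, s, t] with hv
    have hvsum : ∑ i, v i = 1 := by simp [hv, Fin.sum_univ_three]; ring
    have hwc : w = Finset.univ.affineCombination ℝ (⇑c) v := by
      rw [Finset.univ.affineCombination_eq_linear_combination _ _ hvsum]
      rw [hw, combo_eq]
      simp [hc, hv, Fin.sum_univ_three]
    -- compute the big-triangle coordinate of the third vertex to get `1 - s - t > 0`
    have hcoord2 : b.coord 2 w = (1 - s - t) * b.coord 2 z₀ := by
      rw [hwc, coord_of_combo b 2 (⇑c) v hvsum]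
      simp [hc, hv, hbc0, hbc1]
    have h1st : 0 < 1 - s - t := by
      have hw2 := hwint 2
      rw [hcoord2] at hw2
      nlinarith [h 2]
    intro i
    have : c.coord i w = v i := by
      rw [hwc]
      exact c.coord_apply_combination_of_mem (Finset.mem_univ i) hvsum
    rw [this]
    fin_cases i <;> simp [hv] <;> linarith
  · intro hw
    set v : Fin 3 → ℝ := fun i => c.coord i w with hv
    have hvsum : ∑ i, v i = 1 := c.sum_coord_apply_eq_one w
    have hwc : w = Finset.univ.affineCombination ℝ (⇑c) v :=
      (c.affineCombination_coord_eq_self w).symm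
    have hv0 : 0 < v 0 := hw 0
    have hv1 : 0 < v 1 := hw 1
    have hv2 : 0 < v 2 := hw 2
    have hvsum' : v 0 + v 1 + v 2 = 1 := by
      rw [← hvsum, Fin.sum_univ_three]
    constructor
    · -- `w` is in the open sector
      refine ⟨v 1, v 2, hv1, hv2, ?_⟩
      rw [combo_eq, hwc, Finset.univ.affineCombination_eq_linear_combination _ _ hvsum]
      rw [show (1 : ℝ) - v 1 - v 2 = v 0 by linarith]
      simp [hc, Fin.sum_univ_three]
    · -- `w` is in the interior of the big triangle
      intro m
      have hm : b.coord m w =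
          v 0 * b.coord m z₀ + v 1 * b.coord m (b 0) + v 2 * b.coord m (b 1) := by
        rw [hwc, coord_of_combo b m (⇑c) v hvsum]
        simp [hc]
      rw [hm]
      fin_cases m <;>
        simp [AffineBasis.coord_apply] <;>
        nlinarith [h 0, h 1, h 2]

/-- For `z₀` strictly inside the triangle `conv{z₁, z₂, z₃}`, the intersections
of the three open sectors at `z₀` (toward consecutive pairs of vertices) with
the open triangle are exactly the interiors of the three sub-triangles
`(z₀,z₁,z₂)`, `(z₀,z₂,z₃)`, `(z₀,z₃,z₁)`. -/
theorem sector_inter_triangle_eq_subtriangle (z₀ z₁ z₂ z₃ : ℂ)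
    (hint : z₀ ∈ interior (convexHull ℝ ({z₁, z₂, z₃} : Set ℂ))) :
    openSector z₀ z₁ z₂ ∩ interior (convexHull ℝ ({z₁, z₂, z₃} : Set ℂ)) =
        interior (convexHull ℝ ({z₀, z₁, z₂} : Set ℂ)) ∧
    openSector z₀ z₂ z₃ ∩ interior (convexHull ℝ ({z₁, z₂, z₃} : Set ℂ)) =
        interior (convexHull ℝ ({z₀, z₂, z₃} : Set ℂ)) ∧
    openSector z₀ z₃ z₁ ∩ interior (convexHull ℝ ({z₁, z₂, z₃} : Set ℂ)) =
        interior (convexHull ℝ ({z₀, z₃, z₁} : Set ℂ)) := by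
  classical
  -- the affine span of the vertex set is everything since the interior is nonempty
  have hspan : affineSpan ℝ ({z₁, z₂, z₃} : Set ℂ) = ⊤ :=
    interior_convexHull_nonempty_iff_affineSpan_eq_top.1 ⟨z₀, hint⟩
  -- a generic construction for each cyclic order of the vertices
  have main : ∀ u v w : ℂ, ({u, v, w} : Set ℂ) = ({z₁, z₂, z₃} : Set ℂ) →
      openSector z₀ u v ∩ interior (convexHull ℝ ({z₁, z₂, z₃} : Set ℂ)) =
        interior (convexHull ℝ ({z₀, u, v} : Set ℂ)) := by
    intro u v w huvw
    have hrange : Set.range ![u, v, w] = ({z₁, z₂, z₃} : Set ℂ) := by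
      rw [← huvw]
      ext x
      simp [Matrix.range_cons, Matrix.range_empty]
      tauto
    have hq : affineSpan ℝ (Set.range ![u, v, w]) = ⊤ := by rw [hrange]; exact hspan
    let b : AffineBasis (Fin 3) ℝ ℂ :=
      ⟨![u, v, w], affineIndependent_of_span_top hq, hq⟩
    have hb : ⇑b = ![u, v, w] := rfl
    have hbrange : Set.range ⇑b = ({z₁, z₂, z₃} : Set ℂ) := by rw [hb]; exact hrange
    have hz₀ : ∀ i, 0 < b.coord i z₀ := by
      have : z₀ ∈ interior (convexHull ℝ (Set.range ⇑b)) := by rwa [hbrange]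
      rwa [b.interior_convexHull] at this
    have := key b z₀ hz₀
    rw [hbrange] at this
    simpa [hb] using this
  refine ⟨main z₁ z₂ z₃ rfl, main z₂ z₃ z₁ ?_, main z₃ z₁ z₂ ?_⟩ <;>
    · ext x; simp; tauto
end
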